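/- Let G be a group, H a subgroup, and suppose (a_1,b_1) is reducible to (a_2,b_2) by elements g_1, ..., g_n in G, meaning there is a chain of pairs where each successive pair is obtained as (a_{k+1}, b_{k+1}) = ([a_k^{-1}, g_k], [g_k, b_k]). Then a_2 b_2 is a product of 2^n conjugates of a_1 b_1 and (a_1 b_1)^{-1} by elements of the subgroup generated by {a_1, g_1, ..., g_n}. -/

import Mathlib

open Matrix

/-- An exchange ring: for every `x` there is an idempotent `e ∈ xR` with `1 - e ∈ (1-x)R`. -/
def IsExchangeRing (R : Type*) [Ring R] : Prop :=
  ∀ x : R, ∃ e r s : R, e * e = e ∧ e = x * r ∧ 1 - e = (1 - x) * s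

/-- The elementary transvection `t_{ij}(x) = e + x e^{ij}` as an element of `GL n R`. -/
def transv {n : ℕ} {R : Type*} [Ring R] (i j : Fin n) (hij : i ≠ j) (x : R) :
    (Matrix (Fin n) (Fin n) R)ˣ :=
  ⟨1 + Matrix.single i j x, 1 + Matrix.single i j (-x),
    by
      have h0 : Matrix.single i j x * Matrix.single i j (-x) = 0 :=
        Matrix.single_mul_single_of_ne (h := hij.symm) ..
      have h1 : Matrix.single i j (-x) * Matrix.single i j x = 0 :=
        Matrix.single_mul_single_of_ne (h := hij.symm) ..
      simp [mul_add, add_mul, h0, h1, ← Matrix.single_add, add_assoc],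
    by
      have h0 : Matrix.single i j x * Matrix.single i j (-x) = 0 :=
        Matrix.single_mul_single_of_ne (h := hij.symm) ..
      have h1 : Matrix.single i j (-x) * Matrix.single i j x = 0 :=
        Matrix.single_mul_single_of_ne (h := hij.symm) ..
      simp [mul_add, add_mul, h0, h1, ← Matrix.single_add, add_assoc]⟩

/-- The elementary subgroup `E_n(R)` of `GL_n(R)`. -/
def elemGroup (n : ℕ) (R : Type*) [Ring R] : Subgroup ((Matrix (Fin n) (Fin n) R)ˣ) :=
  Subgroup.closure { g | ∃ i j : Fin n, ∃ hij : i ≠ j, ∃ x : R, g = transv i j hij x }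

/-- The preelementary subgroup `E_n(I)` of level a two-sided ideal `I`. -/
def preElem (n : ℕ) (R : Type*) [Ring R] (I : TwoSidedIdeal R) : Subgroup ((Matrix (Fin n) (Fin n) R)ˣ) :=
  Subgroup.closure { g | ∃ i j : Fin n, ∃ hij : i ≠ j, ∃ x ∈ I, g = transv i j hij x }

/-- The relative elementary subgroup `E_n(R,I)`: the normal closure of `E_n(I)` in `E_n(R)`. -/
def relElem (n : ℕ) (R : Type*) [Ring R] (I : TwoSidedIdeal R) : Subgroup ((Matrix (Fin n) (Fin n) R)ˣ) :=
  Subgroup.closure { g | ∃ τ ∈ elemGroup n R, ∃ ε ∈ preElem n R I, g = τ⁻¹ * ε * τ }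

/-- The full congruence subgroup `C_n(R,I)`: preimage of the center of `GL_n(R/I)`. -/
def congrSubgroup (n : ℕ) (R : Type*) [Ring R] (I : TwoSidedIdeal R) :
    Subgroup ((Matrix (Fin n) (Fin n) R)ˣ) :=
  Subgroup.comap
    (Units.map ((RingHom.mapMatrix (RingCon.mk' I.ringCon)).toMonoidHom :
      Matrix (Fin n) (Fin n) R →* Matrix (Fin n) (Fin n) I.ringCon.Quotient))
    (Subgroup.center ((Matrix (Fin n) (Fin n) I.ringCon.Quotient)ˣ))

/-- `x` is a product of `m` `H`-conjugates of `a` and `a⁻¹`. -/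
def IsProdConj {G : Type*} [Group G] (H : Subgroup G) (a x : G) (m : ℕ) : Prop :=
  ∃ f : Fin m → G, (∀ k, ∃ h ∈ H, f k = h⁻¹ * a * h ∨ f k = h⁻¹ * a⁻¹ * h) ∧
    x = (List.ofFn f).prod

open scoped commutatorElement

/-- `(p₁,p₂)` reduces to `(q₁,q₂)` by `g`, i.e. `q₁ = [p₁⁻¹, g]` and `q₂ = [g, p₂]`. -/
def ReducesBy {G : Type*} [Group G] (p q : G × G) (g : G) : Prop :=
  q.1 = ⁅p.1⁻¹, g⁆ ∧ q.2 = ⁅g, p.2⁆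

/-! The identity `⁅a⁻¹, g⁆ * ⁅g, b⁆ = (a * b) ^ (g⁻¹ * a) * (a * b)⁻¹ ^ a` (conjugation written
`x ^ h = h⁻¹ * x * h`) expresses the product of a reduced pair as two conjugates of `a * b` and
its inverse, by elements of any subgroup containing `a` and `g`; since `⁅a⁻¹, g⁆` again lies in
that subgroup, induction along the chain doubles the number of conjugates at every step. -/

section IsProdConj

variable {G : Type*} [Group G] {H : Subgroup G} {a x y : G} {m m' : ℕ}

theorem isProdConj_iff_exists_list :
    IsProdConj H a x m ↔ ∃ l : List G, l.length = m ∧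
      (∀ c ∈ l, ∃ h ∈ H, c = h⁻¹ * a * h ∨ c = h⁻¹ * a⁻¹ * h) ∧ x = l.prod := by
  constructor
  · rintro ⟨f, hf, rfl⟩
    refine ⟨List.ofFn f, List.length_ofFn, fun c hc => ?_, rfl⟩
    obtain ⟨k, rfl⟩ := List.mem_ofFn.mp hc
    exact hf k
  · rintro ⟨l, rfl, hl, rfl⟩
    exact ⟨l.get, fun k => hl _ (l.get_mem k), by rw [List.ofFn_get]⟩

theorem isProdConj_self : IsProdConj H a a 1 :=
  ⟨fun _ => a, fun _ => ⟨1, H.one_mem, by simp⟩, by simp⟩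

theorem IsProdConj.inv (hx : IsProdConj H a x m) : IsProdConj H a x⁻¹ m := by
  obtain ⟨l, rfl, hl, rfl⟩ := isProdConj_iff_exists_list.mp hx
  refine isProdConj_iff_exists_list.mpr
    ⟨(l.map (·⁻¹)).reverse, by simp, ?_, List.prod_inv_reverse l⟩
  simp only [List.mem_reverse, List.mem_map, forall_exists_index, and_imp]
  rintro _ c hc rfl
  obtain ⟨h, hH, hc | hc⟩ := hl c hc
  · exact ⟨h, hH, .inr (by simp [hc, mul_assoc])⟩
  · exact ⟨h, hH, .inl (by simp [hc, mul_assoc])⟩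

theorem IsProdConj.conj (hx : IsProdConj H a x m) {h : G} (hh : h ∈ H) :
    IsProdConj H a (h⁻¹ * x * h) m := by
  obtain ⟨f, hf, rfl⟩ := hx
  refine ⟨fun k => h⁻¹ * f k * h, fun k => ?_, ?_⟩
  · obtain ⟨h', hH', hk | hk⟩ := hf k
    · exact ⟨h' * h, H.mul_mem hH' hh, .inl (by simp [hk, mul_assoc])⟩
    · exact ⟨h' * h, H.mul_mem hH' hh, .inr (by simp [hk, mul_assoc])⟩
  · simpa [List.map_ofFn, Function.comp_def] using map_list_prod (MulAut.conj h⁻¹) (List.ofFn f)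

theorem IsProdConj.mul (hx : IsProdConj H a x m) (hy : IsProdConj H a y m') :
    IsProdConj H a (x * y) (m + m') := by
  obtain ⟨f, hf, rfl⟩ := hx
  obtain ⟨f', hf', rfl⟩ := hy
  refine ⟨Fin.append f f', Fin.addCases (by simpa using hf) (by simpa using hf'), ?_⟩
  rw [List.ofFn_fin_append, List.prod_append]

end IsProdConj

section ReducesBy

variable {G : Type*} [Group G]

theorem commutatorElement_inv_mul_commutatorElement (a b g : G) :
    ⁅a⁻¹, g⁆ * ⁅g, b⁆ = (g⁻¹ * a)⁻¹ * (a * b) * (g⁻¹ * a) * (a⁻¹ * (a * b)⁻¹ * a) := by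
  simp only [commutatorElement_def]
  group

variable {H : Subgroup G} {p q : G × G} {g c : G} {m : ℕ}

theorem ReducesBy.fst_mem (hpq : ReducesBy p q g) (hp : p.1 ∈ H) (hg : g ∈ H) : q.1 ∈ H := by
  rw [hpq.1, commutatorElement_def, inv_inv]
  exact H.mul_mem (H.mul_mem (H.mul_mem (H.inv_mem hp) hg) hp) (H.inv_mem hg)

theorem ReducesBy.isProdConj (hpq : ReducesBy p q g) (hp : p.1 ∈ H) (hg : g ∈ H)
    (hprod : IsProdConj H c (p.1 * p.2) m) : IsProdConj H c (q.1 * q.2) (2 * m) := by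
  rw [hpq.1, hpq.2, commutatorElement_inv_mul_commutatorElement, two_mul]
  exact (hprod.conj (H.mul_mem (H.inv_mem hg) hp)).mul (hprod.inv.conj hp)

end ReducesBy

theorem reduction_lemma {G : Type*} [Group G] (n : ℕ) (p : Fin (n + 1) → G × G)
    (g : Fin n → G) (hred : ∀ k : Fin n, ReducesBy (p k.castSucc) (p k.succ) (g k)) :
    IsProdConj (Subgroup.closure ({(p 0).1} ∪ Set.range g))
      ((p 0).1 * (p 0).2) ((p (Fin.last n)).1 * (p (Fin.last n)).2) (2 ^ n) := by
  set H := Subgroup.closure ({(p 0).1} ∪ Set.range g)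
  have hg : ∀ k, g k ∈ H := fun k => Subgroup.subset_closure (.inr ⟨k, rfl⟩)
  suffices ∀ k : Fin (n + 1), (p k).1 ∈ H ∧
      IsProdConj H ((p 0).1 * (p 0).2) ((p k).1 * (p k).2) (2 ^ (k : ℕ)) from
    (this (Fin.last n)).2
  intro k
  induction k using Fin.induction with
  | zero => exact ⟨Subgroup.subset_closure (.inl rfl), isProdConj_self⟩
  | succ k ih =>
    refine ⟨(hred k).fst_mem ih.1 (hg k), ?_⟩
    rw [Fin.val_succ, pow_succ, mul_comm]
    exact (hred k).isProdConj ih.1 (hg k) ih.2
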